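/- arXiv:2308.06560 — 5 statements merged into one kernel-verified Lean document; each statement's English description precedes it below -/
import Mathlib

section
/- Let n ≥ 1 be a natural number and let V, X : ℝ → ℝ be differentiable on (0,∞) and satisfy n·V(r) − r·V′(r) = 2·X(r) − (4/r)·X′(r) for every r > 0. Then the function P(r) = V(r)/r^n − 4·X(r)/r^{n+2} is differentiable on (0,∞) with P′(r) = (2·X(r)/r^{n+1})·(2(n+2)/r² − 1) for every r > 0. -/
/-! Differentiating the quotients gives `P′ = (rV′ − nV)/r^{n+1} − 4(rX′ − (n+2)X)/r^{n+3}`;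
Cao–Zhou's identity turns `rV′ − nV` into `4X′/r − 2X`, and then the `X′` terms cancel. -/

theorem HasDerivAt.div_pow {f : ℝ → ℝ} {f' r : ℝ} (hf : HasDerivAt f f' r) (hr : r ≠ 0)
    (k : ℕ) : HasDerivAt (fun s => f s / s ^ k) ((r * f' - k * f r) / r ^ (k + 1)) r := by
  cases k with
  | zero => simpa [mul_div_cancel_left₀ _ hr] using hf
  | succ m =>
    refine (hf.div (hasDerivAt_pow (m + 1) r) (pow_ne_zero _ hr)).congr_deriv ?_
    rw [Nat.add_sub_cancel]
    field_simp
    ring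

theorem shrinker_P_hasDerivAt_general (n : ℕ) (V X : ℝ → ℝ)
    (hV : ∀ r > (0 : ℝ), DifferentiableAt ℝ V r)
    (hX : ∀ r > (0 : ℝ), DifferentiableAt ℝ X r)
    (hid : ∀ r > (0 : ℝ),
      (n : ℝ) * V r - r * deriv V r = 2 * X r - (4 / r) * deriv X r) :
    ∀ r > (0 : ℝ),
      HasDerivAt (fun s => V s / s ^ n - 4 * X s / s ^ (n + 2))
        ((2 * X r / r ^ (n + 1)) * (2 * ((n : ℝ) + 2) / r ^ 2 - 1)) r := by
  intro r hr
  have hVquot := (hV r hr).hasDerivAt.div_pow hr.ne' n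
  have hXquot := ((hX r hr).hasDerivAt.const_mul 4).div_pow hr.ne' (n + 2)
  refine (hVquot.sub hXquot).congr_deriv ?_
  have hCaoZhou : r * deriv V r - n * V r = 4 / r * deriv X r - 2 * X r := by
    linarith [hid r hr]
  rw [hCaoZhou]
  push_cast
  field_simp
  ring

/-- Under Cao–Zhou's identity, the function
`P(r) = V(r)/r^n − 4·X(r)/r^{n+2}` is differentiable on `(0,∞)` with
`P′(r) = (2·X(r)/r^{n+1})·(2(n+2)/r² − 1)`. -/
theorem shrinker_P_hasDerivAt (n : ℕ) (hn : 1 ≤ n) (V X : ℝ → ℝ)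
    (hV : ∀ r > (0 : ℝ), DifferentiableAt ℝ V r)
    (hX : ∀ r > (0 : ℝ), DifferentiableAt ℝ X r)
    (hid : ∀ r > (0 : ℝ),
      (n : ℝ) * V r - r * deriv V r = 2 * X r - (4 / r) * deriv X r) :
    ∀ r > (0 : ℝ),
      HasDerivAt (fun s => V s / s ^ n - 4 * X s / s ^ (n + 2))
        ((2 * X r / r ^ (n + 1)) * (2 * ((n : ℝ) + 2) / r ^ 2 - 1)) r :=
  shrinker_P_hasDerivAt_general n V X hV hX hid
end

section
/- Let n ≥ 1 be a natural number and let V, X : ℝ → ℝ be differentiable on (0,∞) and satisfy n·V(r) − r·V′(r) = 2·X(r) − (4/r)·X′(r) for every r > 0. Assume X(r) ≥ 0 for all r > 0, X is non-decreasing on (0,∞), and P(r) = V(r)/r^n − 4·X(r)/r^{n+2} converges to a real number L as r → ∞. Then for every r ≥ √(2(n+2)) one has L − P(r) ≤ X(r)·(4/r^{n+2} − 2/(n·r^n)), and consequently X(r)/r^n ≤ (n/2)·(V(r)/r^n − L). -/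
/-!
With `w(r) = 2(2(n+2) - r²)/r^{n+3}`, Cao–Zhou's identity is exactly what makes `P' = X·w`,
while the correction `g(r) = 4/r^{n+2} - 2/(n rⁿ)` satisfies `g' = -w`. Hence for fixed `r₀`,
`(P + X(r₀)·g)' = (X - X(r₀))·w ≤ 0` on `[r₀, ∞)` as soon as `r₀² ≥ 2(n+2)`, because `X` is
non-decreasing and `w ≤ 0` there. Since `g → 0`, the non-increasing function `P + X(r₀)·g` tends
to `L`, so `L ≤ P(r₀) + X(r₀)·g(r₀)`.
-/

open Filter Set Topology

theorem natCast_mul_pow_pred_eq_div (n : ℕ) {s : ℝ} (hs : s ≠ 0) :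
    (n : ℝ) * s ^ (n - 1) = n * s ^ n / s := by
  rcases n with _ | m
  · simp
  · field_simp
    simp [pow_succ]

namespace CaoZhou

noncomputable def P (n : ℕ) (V X : ℝ → ℝ) (s : ℝ) : ℝ := V s / s ^ n - 4 * X s / s ^ (n + 2)

noncomputable def weight (n : ℕ) (s : ℝ) : ℝ := 2 * (2 * ((n : ℝ) + 2) - s ^ 2) / s ^ (n + 3)

noncomputable def correction (n : ℕ) (s : ℝ) : ℝ := 4 / s ^ (n + 2) - 2 / ((n : ℝ) * s ^ n)

theorem hasDerivAt_P {n : ℕ} {V X : ℝ → ℝ} {s : ℝ} (hs : 0 < s)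
    (hV : DifferentiableAt ℝ V s) (hX : DifferentiableAt ℝ X s)
    (hid : (n : ℝ) * V s - s * deriv V s = 2 * X s - (4 / s) * deriv X s) :
    HasDerivAt (P n V X) (X s * weight n s) s := by
  have hV' : deriv V s = ((n : ℝ) * V s - 2 * X s + 4 / s * deriv X s) / s := by
    field_simp at hid ⊢
    linarith
  refine ((hV.hasDerivAt.div (hasDerivAt_pow n s) (pow_ne_zero _ hs.ne')).sub
    ((hX.hasDerivAt.const_mul 4).div (hasDerivAt_pow (n + 2) s) (pow_ne_zero _ hs.ne'))).congr_deriv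
    ?_
  rw [weight, hV', natCast_mul_pow_pred_eq_div n hs.ne']
  field_simp
  push_cast
  ring

theorem hasDerivAt_correction {n : ℕ} (hn : n ≠ 0) {s : ℝ} (hs : s ≠ 0) :
    HasDerivAt (correction n) (-weight n s) s := by
  refine (((hasDerivAt_const s 4).div (hasDerivAt_pow (n + 2) s) (pow_ne_zero _ hs)).sub
    ((hasDerivAt_const s 2).div ((hasDerivAt_pow n s).const_mul (n : ℝ))
      (mul_ne_zero (Nat.cast_ne_zero.mpr hn) (pow_ne_zero _ hs)))).congr_deriv ?_
  have : (n : ℝ) ≠ 0 := Nat.cast_ne_zero.mpr hn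
  rw [weight, natCast_mul_pow_pred_eq_div n hs]
  field_simp
  push_cast
  ring

theorem weight_nonpos {n : ℕ} {s : ℝ} (hs : √(2 * ((n : ℝ) + 2)) ≤ s) : weight n s ≤ 0 := by
  obtain ⟨hs0, hs2⟩ := Real.sqrt_le_iff.mp hs
  exact div_nonpos_of_nonpos_of_nonneg (by linarith) (by positivity)

theorem tendsto_correction_atTop (n : ℕ) : Tendsto (correction n) atTop (𝓝 0) := by
  have h4 : Tendsto (fun s : ℝ => 4 / s ^ (n + 2)) atTop (𝓝 0) :=
    tendsto_const_nhds.div_atTop (tendsto_pow_atTop (by omega))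
  show Tendsto (fun s : ℝ => 4 / s ^ (n + 2) - 2 / ((n : ℝ) * s ^ n)) atTop (𝓝 0)
  rcases Nat.eq_zero_or_pos n with rfl | hn
  · simpa using h4
  · have h2 : Tendsto (fun s : ℝ => 2 / ((n : ℝ) * s ^ n)) atTop (𝓝 0) :=
      tendsto_const_nhds.div_atTop
        ((tendsto_pow_atTop hn.ne').const_mul_atTop (by exact_mod_cast hn))
    simpa using h4.sub h2

end CaoZhou

theorem AntitoneOn.add_mul_of_hasDerivAt {f g u w : ℝ → ℝ} {a : ℝ}
    (hf : ∀ s ∈ Ici a, HasDerivAt f (u s * w s) s) (hg : ∀ s ∈ Ici a, HasDerivAt g (-w s) s)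
    (hu : MonotoneOn u (Ici a)) (hw : ∀ s ∈ Ici a, w s ≤ 0) :
    AntitoneOn (fun s => f s + u a * g s) (Ici a) := by
  have hderiv : ∀ s ∈ Ici a, HasDerivAt (fun s => f s + u a * g s) ((u s - u a) * w s) s :=
    fun s hs => ((hf s hs).add ((hg s hs).const_mul (u a))).congr_deriv (by ring)
  refine antitoneOn_of_deriv_nonpos (convex_Ici a)
    (fun s hs => (hderiv s hs).continuousAt.continuousWithinAt)
    (fun s hs => (hderiv s (interior_subset hs)).differentiableAt.differentiableWithinAt)
    (fun s hs => ?_)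
  have hs' := interior_subset hs
  rw [(hderiv s hs').deriv]
  exact mul_nonpos_of_nonneg_of_nonpos (sub_nonneg.mpr (hu self_mem_Ici hs' hs')) (hw s hs')

theorem AntitoneOn.le_of_tendsto_atTop {f : ℝ → ℝ} {a L : ℝ} (hf : AntitoneOn f (Ici a))
    (hL : Tendsto f atTop (𝓝 L)) : L ≤ f a :=
  le_of_tendsto hL (eventually_ge_atTop a |>.mono fun _ hs => hf self_mem_Ici hs hs)

open CaoZhou

theorem shrinker_X_decay_general (n : ℕ) (hn : 1 ≤ n) (V X : ℝ → ℝ)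
    (hV : ∀ r > (0 : ℝ), DifferentiableAt ℝ V r)
    (hX : ∀ r > (0 : ℝ), DifferentiableAt ℝ X r)
    (hid : ∀ r > (0 : ℝ),
      (n : ℝ) * V r - r * deriv V r = 2 * X r - (4 / r) * deriv X r)
    (hXmono : MonotoneOn X (Set.Ioi 0))
    (L : ℝ)
    (hP : Tendsto (fun s => V s / s ^ n - 4 * X s / s ^ (n + 2)) atTop (nhds L)) :
    ∀ r, Real.sqrt (2 * ((n : ℝ) + 2)) ≤ r →
      L - (V r / r ^ n - 4 * X r / r ^ (n + 2)) ≤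
          X r * (4 / r ^ (n + 2) - 2 / ((n : ℝ) * r ^ n)) ∧
        X r / r ^ n ≤ ((n : ℝ) / 2) * (V r / r ^ n - L) := by
  intro r hr
  have hr0 : 0 < r := (Real.sqrt_pos.mpr (by positivity)).trans_le hr
  have hpos : Ici r ⊆ Ioi 0 := fun s hs => hr0.trans_le hs
  have hanti : AntitoneOn (fun s => P n V X s + X r * correction n s) (Ici r) :=
    .add_mul_of_hasDerivAt
      (fun s hs => hasDerivAt_P (hpos hs) (hV s (hpos hs)) (hX s (hpos hs)) (hid s (hpos hs)))
      (fun s hs => hasDerivAt_correction (by omega) (hpos hs).ne')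
      (hXmono.mono hpos) (fun s hs => weight_nonpos (hr.trans hs))
  have hlim := hP.add ((tendsto_correction_atTop n).const_mul (X r))
  rw [mul_zero, add_zero] at hlim
  have hL := hanti.le_of_tendsto_atTop hlim
  simp only [P, correction] at hL
  refine ⟨by linarith, ?_⟩
  have hn' : (0 : ℝ) < n := by exact_mod_cast hn
  have hexpand : X r * (4 / r ^ (n + 2) - 2 / (n * r ^ n)) =
      4 * X r / r ^ (n + 2) - 2 / (n : ℝ) * (X r / r ^ n) := by
    field_simp
  have hscaled : 2 / (n : ℝ) * (X r / r ^ n) ≤ V r / r ^ n - L := by linarith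
  calc X r / r ^ n = (n : ℝ) / 2 * (2 / n * (X r / r ^ n)) := by field_simp
    _ ≤ (n : ℝ) / 2 * (V r / r ^ n - L) := by gcongr

/-- Under Cao–Zhou's identity, `X ≥ 0`, `X` non-decreasing on `(0,∞)`,
and `P(r) = V(r)/r^n − 4X(r)/r^{n+2} → L` as `r → ∞`, for every `r ≥ √(2(n+2))` one has
`L − P(r) ≤ X(r)·(4/r^{n+2} − 2/(n·r^n))` and thus `X(r)/r^n ≤ (n/2)·(V(r)/r^n − L)`. -/
theorem shrinker_X_decay (n : ℕ) (hn : 1 ≤ n) (V X : ℝ → ℝ)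
    (hV : ∀ r > (0 : ℝ), DifferentiableAt ℝ V r)
    (hX : ∀ r > (0 : ℝ), DifferentiableAt ℝ X r)
    (hid : ∀ r > (0 : ℝ),
      (n : ℝ) * V r - r * deriv V r = 2 * X r - (4 / r) * deriv X r)
    (hX0 : ∀ r > (0 : ℝ), 0 ≤ X r)
    (hXmono : MonotoneOn X (Set.Ioi 0))
    (L : ℝ)
    (hP : Tendsto (fun s => V s / s ^ n - 4 * X s / s ^ (n + 2)) atTop (nhds L)) :
    ∀ r, Real.sqrt (2 * ((n : ℝ) + 2)) ≤ r →
      L - (V r / r ^ n - 4 * X r / r ^ (n + 2)) ≤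
          X r * (4 / r ^ (n + 2) - 2 / ((n : ℝ) * r ^ n)) ∧
        X r / r ^ n ≤ ((n : ℝ) / 2) * (V r / r ^ n - L) :=
  shrinker_X_decay_general n hn V X hV hX hid hXmono L hP
end

section
/- Let n ≥ 1 be a natural number and let V, X : ℝ → ℝ be differentiable on (0,∞) and satisfy n·V(r) − r·V′(r) = 2·X(r) − (4/r)·X′(r) for every r > 0. Assume 0 ≤ X(r) ≤ (n/2)·V(r) for all r > 0, X is non-decreasing on (0,∞), and V(r)/r^n converges to a positive real number ℓ as r → ∞. Then X(r)/V(r) → 0 as r → ∞. -/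
/-!
Cao–Zhou's identity is exactly what makes the derivative of the corrected volume ratio
`P(r) = V(r)/r^n - 4 X(r)/r^(n+2)` free of `X'`: one gets `P'(r) = -(2 - 4(n+2)/r²) X(r)/r^(n+1)`.
For `r² ≥ 4(n+2)` and `X` non-decreasing, the mean value theorem on `[s, 2s]` then gives
`X(s)/s^n ≤ 2^(n+1) (P(s) - P(2s))`. Since `X ≤ (n/2) V`, the correction term is `O(V/r^(n+2))`,
so `P → ℓ`, the right-hand side tends to `0`, and `X/V = (X/r^n)/(V/r^n) → 0/ℓ`.
-/

open Filter Topology Set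

noncomputable def correctedVolumeRatio (n : ℕ) (V X : ℝ → ℝ) (r : ℝ) : ℝ :=
  V r / r ^ n - 4 * X r / r ^ (n + 2)

theorem hasDerivAt_pow_of_ne_zero (n : ℕ) {r : ℝ} (hr : r ≠ 0) :
    HasDerivAt (fun x => x ^ n) (n * r ^ n / r) r := by
  refine (hasDerivAt_pow n r).congr_deriv ?_
  rcases n with _ | n
  · simp
  · rw [Nat.add_sub_cancel]
    field_simp
    ring

theorem hasDerivAt_correctedVolumeRatio {n : ℕ} {V X : ℝ → ℝ} {r : ℝ} (hr : 0 < r)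
    (hV : DifferentiableAt ℝ V r) (hX : DifferentiableAt ℝ X r)
    (hid : (n : ℝ) * V r - r * deriv V r = 2 * X r - (4 / r) * deriv X r) :
    HasDerivAt (correctedVolumeRatio n V X)
      (-(2 - 4 * (n + 2) / r ^ 2) * X r / r ^ (n + 1)) r := by
  have hr' := hr.ne'
  refine ((hV.hasDerivAt.div (hasDerivAt_pow_of_ne_zero n hr') (pow_ne_zero n hr')).sub
    ((hX.hasDerivAt.const_mul 4).div (hasDerivAt_pow_of_ne_zero (n + 2) hr')
      (pow_ne_zero _ hr'))).congr_deriv ?_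
  field_simp at hid ⊢
  push_cast
  linear_combination (-(r ^ (n + 2) * r ^ (n + 1))) * hid

theorem div_pow_le_correctedVolumeRatio_sub {n : ℕ} {V X : ℝ → ℝ}
    (hV : ∀ r > (0 : ℝ), DifferentiableAt ℝ V r)
    (hX : ∀ r > (0 : ℝ), DifferentiableAt ℝ X r)
    (hid : ∀ r > (0 : ℝ), (n : ℝ) * V r - r * deriv V r = 2 * X r - (4 / r) * deriv X r)
    (hX0 : ∀ r > (0 : ℝ), 0 ≤ X r) (hXmono : MonotoneOn X (Ioi 0))
    {s : ℝ} (hs : 0 < s) (hs2 : 4 * (n + 2) ≤ s ^ 2) :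
    X s / s ^ n ≤
      2 ^ (n + 1) * (correctedVolumeRatio n V X s - correctedVolumeRatio n V X (2 * s)) := by
  set P := correctedVolumeRatio n V X
  have hP : ∀ x > 0, HasDerivAt P (-(2 - 4 * (n + 2) / x ^ 2) * X x / x ^ (n + 1)) x :=
    fun x hx => hasDerivAt_correctedVolumeRatio hx (hV x hx) (hX x hx) (hid x hx)
  obtain ⟨c, ⟨hsc, hc2s⟩, hc_slope⟩ := exists_hasDerivAt_eq_slope P _ (by linarith : s < 2 * s)
    (fun x hx => (hP x (hs.trans_le hx.1)).continuousAt.continuousWithinAt)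
    (fun x hx => hP x (hs.trans hx.1))
  have hc : 0 < c := hs.trans hsc
  have hfactor : 1 ≤ 2 - 4 * (n + 2) / c ^ 2 := by
    have : 4 * (n + 2) / c ^ 2 ≤ 1 := div_le_one_of_le₀ (hs2.trans (by gcongr)) (by positivity)
    linarith
  have hslope : X s / (2 * s) ^ (n + 1) ≤ (P s - P (2 * s)) / s :=
    calc X s / (2 * s) ^ (n + 1) ≤ X c / c ^ (n + 1) :=
          div_le_div₀ (hX0 c hc) (hXmono hs hc hsc.le) (by positivity) (by gcongr)
      _ ≤ (2 - 4 * (n + 2) / c ^ 2) * X c / c ^ (n + 1) := by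
          have := hX0 c hc
          gcongr
          exact le_mul_of_one_le_left this hfactor
      _ = (P s - P (2 * s)) / s := by
          rw [show 2 * s - s = s by ring, neg_mul, neg_div, neg_eq_iff_eq_neg, ← neg_div,
            neg_sub] at hc_slope
          exact hc_slope
  calc X s / s ^ n = 2 ^ (n + 1) * (s * (X s / (2 * s) ^ (n + 1))) := by
        field_simp; ring
    _ ≤ 2 ^ (n + 1) * (s * ((P s - P (2 * s)) / s)) := by gcongr
    _ = 2 ^ (n + 1) * (P s - P (2 * s)) := by field_simp

theorem tendsto_correctedVolumeRatio {n : ℕ} {V X : ℝ → ℝ} {ℓ : ℝ}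
    (hX0 : ∀ r > (0 : ℝ), 0 ≤ X r) (hXV : ∀ r > (0 : ℝ), X r ≤ ((n : ℝ) / 2) * V r)
    (hVlim : Tendsto (fun r => V r / r ^ n) atTop (𝓝 ℓ)) :
    Tendsto (correctedVolumeRatio n V X) atTop (𝓝 ℓ) := by
  have hbound : Tendsto (fun r : ℝ => 2 * n / r ^ 2 * (V r / r ^ n)) atTop (𝓝 0) := by
    simpa using (tendsto_const_nhds.div_atTop (tendsto_pow_atTop two_ne_zero)).mul hVlim
  have hcorr : Tendsto (fun r => 4 * X r / r ^ (n + 2)) atTop (𝓝 0) := by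
    refine squeeze_zero' ?_ ?_ hbound <;> filter_upwards [eventually_gt_atTop 0] with r hr
    · have := hX0 r hr
      positivity
    · rw [div_mul_div_comm, ← pow_add, add_comm 2 n]
      exact div_le_div_of_nonneg_right (by linarith [hXV r hr]) (by positivity)
  have := hVlim.sub hcorr
  rw [sub_zero] at this
  exact this

theorem tendsto_zero_of_le_mul_sub_comp_two_mul {f g : ℝ → ℝ} {C ℓ : ℝ}
    (hf0 : ∀ᶠ s in atTop, 0 ≤ f s) (hfg : ∀ᶠ s in atTop, f s ≤ C * (g s - g (2 * s)))
    (hg : Tendsto g atTop (𝓝 ℓ)) :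
    Tendsto f atTop (𝓝 0) := by
  have hg2 : Tendsto (fun s => g (2 * s)) atTop (𝓝 ℓ) :=
    hg.comp (tendsto_id.const_mul_atTop two_pos)
  simpa using squeeze_zero' hf0 hfg (by simpa using (hg.sub hg2).const_mul C)

theorem shrinker_average_scalar_to_zero_general (n : ℕ) (V X : ℝ → ℝ)
    (hV : ∀ r > (0 : ℝ), DifferentiableAt ℝ V r)
    (hX : ∀ r > (0 : ℝ), DifferentiableAt ℝ X r)
    (hid : ∀ r > (0 : ℝ),
      (n : ℝ) * V r - r * deriv V r = 2 * X r - (4 / r) * deriv X r)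
    (hX0 : ∀ r > (0 : ℝ), 0 ≤ X r)
    (hXV : ∀ r > (0 : ℝ), X r ≤ ((n : ℝ) / 2) * V r)
    (hXmono : MonotoneOn X (Set.Ioi 0))
    (ℓ : ℝ) (hℓ : 0 < ℓ)
    (hVlim : Tendsto (fun r => V r / r ^ n) atTop (nhds ℓ)) :
    Tendsto (fun r => X r / V r) atTop (nhds 0) := by
  have hXn : Tendsto (fun r => X r / r ^ n) atTop (𝓝 0) := by
    refine tendsto_zero_of_le_mul_sub_comp_two_mul (C := 2 ^ (n + 1)) ?_ ?_
      (tendsto_correctedVolumeRatio hX0 hXV hVlim)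
    · filter_upwards [eventually_gt_atTop 0] with r hr using div_nonneg (hX0 r hr) (by positivity)
    · filter_upwards [eventually_gt_atTop 0,
        (tendsto_pow_atTop two_ne_zero).eventually_ge_atTop (4 * ((n : ℝ) + 2))] with r hr hr2
        using div_pow_le_correctedVolumeRatio_sub hV hX hid hX0 hXmono hr hr2
  refine (zero_div ℓ ▸ hXn.div hVlim hℓ.ne').congr' ?_
  filter_upwards [eventually_gt_atTop 0] with r hr
    using div_div_div_cancel_right₀ (pow_ne_zero n hr.ne') _ _

/-- Under Cao–Zhou's identity, `0 ≤ X ≤ (n/2)·V` on `(0,∞)`,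
`X` non-decreasing on `(0,∞)`, and `V(r)/r^n → ℓ > 0`, one has `X(r)/V(r) → 0`. -/
theorem shrinker_average_scalar_to_zero (n : ℕ) (hn : 1 ≤ n) (V X : ℝ → ℝ)
    (hV : ∀ r > (0 : ℝ), DifferentiableAt ℝ V r)
    (hX : ∀ r > (0 : ℝ), DifferentiableAt ℝ X r)
    (hid : ∀ r > (0 : ℝ),
      (n : ℝ) * V r - r * deriv V r = 2 * X r - (4 / r) * deriv X r)
    (hX0 : ∀ r > (0 : ℝ), 0 ≤ X r)
    (hXV : ∀ r > (0 : ℝ), X r ≤ ((n : ℝ) / 2) * V r)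
    (hXmono : MonotoneOn X (Set.Ioi 0))
    (ℓ : ℝ) (hℓ : 0 < ℓ)
    (hVlim : Tendsto (fun r => V r / r ^ n) atTop (nhds ℓ)) :
    Tendsto (fun r => X r / V r) atTop (nhds 0) :=
  shrinker_average_scalar_to_zero_general n V X hV hX hid hX0 hXV hXmono ℓ hℓ hVlim
end

section
/- Let n ≥ 1 be a natural number, let ω_n = π^{n/2}/Γ(n/2 + 1) denote the volume of the unit ball in ℝ^n, let (M, μ) be a measure space, and let ρ : M → [0,∞) be measurable with μ({x : ρ(x) < r}) < ∞ for every r > 0. If μ({x : ρ(x) < r})/r^n converges to A·ω_n as r → ∞ for some real A ≥ 0, then lim_{τ→∞} ∫_M (4πτ)^{−n/2} · e^{−ρ(x)²/(4τ)} dμ(x) = A. -/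
open Real MeasureTheory Filter

/-!
By the layer-cake formula and the substitution `t = exp (-s)`,
`∫ exp (-ρ² / (4τ)) dμ = ∫₀^∞ exp (-s) W (4τ s) ds` with `W u = μ {ρ² < u}`.
Since `W u ~ A ω_n u^{n/2}` and `W` is monotone, hence dominated by `C + B u^{n/2}`,
dominated convergence gives `(4τ)^{-n/2} ∫₀^∞ exp (-s) W (4τ s) ds → A ω_n Γ(n/2 + 1) = A π^{n/2}`.
-/

open Set Topology

theorem lintegral_ofReal_exp_neg_eq_lintegral_meas_lt {M : Type*} [MeasurableSpace M]
    (μ : Measure M) {f : M → ℝ} (hf : AEMeasurable f μ) :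
    ∫⁻ x, ENNReal.ofReal (exp (-f x)) ∂μ = ∫⁻ s, ENNReal.ofReal (exp (-s)) * μ {x | f x < s} := by
  have himage : (fun s : ℝ => exp (-s)) '' univ = Ioi 0 := by
    rw [image_univ, ← range_exp]
    exact (Equiv.neg ℝ).surjective.range_comp exp
  rw [lintegral_eq_lintegral_meas_lt μ (ae_of_all _ fun x => (exp_pos _).le)
      (measurable_exp.comp_aemeasurable (f := fun x => -f x) hf.neg), ← himage,
    lintegral_image_eq_lintegral_abs_deriv_mul MeasurableSet.univ
      (fun s _ => (hasDerivAt_neg s).exp.hasDerivWithinAt)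
      (fun a _ b _ h => neg_injective (exp_injective h)),
    Measure.restrict_univ]
  refine lintegral_congr fun s => ?_
  have hlevel : {x | exp (-s) < exp (-f x)} = {x | f x < s} := by
    ext x
    exact exp_lt_exp.trans neg_lt_neg_iff
  rw [abs_of_neg (by simpa using exp_pos (-s)), mul_neg_one, neg_neg, hlevel]

theorem integral_exp_neg_div_eq_integral_exp_neg_mul_meas_lt {M : Type*} [MeasurableSpace M]
    (μ : Measure M) {f : M → ℝ} (hf : Measurable f) (hf0 : ∀ x, 0 ≤ f x)
    (hfin : ∀ u, μ {x | f x < u} ≠ ⊤) {c : ℝ} (hc : 0 < c) :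
    ∫ x, exp (-f x / c) ∂μ = ∫ s in Ioi 0, exp (-s) * (μ {x | f x < c * s}).toReal := by
  have hlevel : ∀ s, {x | f x / c < s} = {x | f x < c * s} := fun s => by
    ext x; exact div_lt_iff₀' hc
  have hmono : Monotone fun s => μ {x | f x < c * s} := fun a b hab =>
    measure_mono fun x (hx : f x < c * a) => hx.trans_le (by gcongr)
  rw [integral_eq_lintegral_of_nonneg_ae (ae_of_all _ fun x => (exp_pos _).le)
      (by fun_prop : Measurable fun x => exp (-f x / c)).aestronglyMeasurable,
    integral_eq_lintegral_of_nonneg_ae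
      (ae_of_all _ fun s => mul_nonneg (exp_pos _).le ENNReal.toReal_nonneg)
      ((measurable_exp.comp measurable_neg).mul
        hmono.measurable.ennreal_toReal).aestronglyMeasurable]
  congr 1
  simp_rw [neg_div]
  rw [lintegral_ofReal_exp_neg_eq_lintegral_meas_lt μ (hf.div_const c).aemeasurable,
    ← setLIntegral_eq_of_support_subset (s := Ioi 0)]
  · refine setLIntegral_congr_fun measurableSet_Ioi fun s _ => ?_
    rw [ENNReal.ofReal_mul (exp_pos _).le, ENNReal.ofReal_toReal (hfin _), hlevel]
  · refine fun s hs => mem_Ioi.mpr (lt_of_not_ge fun hs0 => hs ?_)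
    have hempty : {x | f x / c < s} = ∅ := eq_empty_of_forall_notMem fun x (hx : f x / c < s) =>
      hx.not_ge (hs0.trans (div_nonneg (hf0 x) hc.le))
    simp [hempty]

theorem Monotone.exists_abs_le_add_mul_rpow {W : ℝ → ℝ} (hW : Monotone W)
    {k L : ℝ} (hWL : Tendsto (fun u => W u / u ^ k) atTop (𝓝 L)) :
    ∃ C B : ℝ, 0 ≤ C ∧ ∀ u, 0 ≤ u → |W u| ≤ C + B * u ^ k := by
  obtain ⟨R, hR⟩ := eventually_atTop.mp
    (hWL.abs.eventually (eventually_le_nhds (lt_add_one |L|)))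
  set R₁ := max R 1
  refine ⟨|W 0| + |W R₁|, |L| + 1, by positivity, fun u hu => ?_⟩
  rcases le_or_gt R₁ u with hRu | huR
  · have hupos : 0 < u ^ k := rpow_pos_of_pos (one_pos.trans_le ((le_max_right _ _).trans hRu)) k
    have hratio := hR u ((le_max_left _ _).trans hRu)
    rw [abs_div, abs_of_pos hupos, div_le_iff₀ hupos] at hratio
    linarith [abs_nonneg (W 0), abs_nonneg (W R₁)]
  · have hlow : W 0 ≤ W u := hW hu
    have hup : W u ≤ W R₁ := hW huR.le
    calc |W u| ≤ |W 0| + |W R₁| := abs_le.mpr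
          ⟨by linarith [neg_abs_le (W 0), abs_nonneg (W R₁)],
            by linarith [le_abs_self (W R₁), abs_nonneg (W 0)]⟩
      _ ≤ |W 0| + |W R₁| + (|L| + 1) * u ^ k := le_add_of_nonneg_right (by positivity)

theorem Monotone.tendsto_rpow_neg_mul_integral_exp_neg_mul {W : ℝ → ℝ}
    (hW : Monotone W) {k L : ℝ} (hk : 0 ≤ k) (hWL : Tendsto (fun u => W u / u ^ k) atTop (𝓝 L)) :
    Tendsto (fun a => a ^ (-k) * ∫ s in Ioi 0, exp (-s) * W (a * s)) atTop
      (𝓝 (L * Gamma (k + 1))) := by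
  obtain ⟨C, B, hC, hbound⟩ := hW.exists_abs_le_add_mul_rpow hWL
  have hlimit : ∫ s in Ioi 0, exp (-s) * (L * s ^ k) = L * Gamma (k + 1) := by
    rw [Gamma_eq_integral (by linarith), ← integral_const_mul]
    refine setIntegral_congr_fun measurableSet_Ioi fun s _ => ?_
    simp only [add_sub_cancel_right]
    ring
  rw [← hlimit]
  simp_rw [← integral_const_mul]
  refine tendsto_integral_filter_of_dominated_convergence (fun s => exp (-s) * (C + B * s ^ k))
    (Eventually.of_forall fun a => ?_) ?_ ?_ ?_
  · exact (measurable_const.mul (measurable_exp.comp measurable_neg |>.mul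
      (hW.measurable.comp (measurable_const_mul a)))).aestronglyMeasurable
  · filter_upwards [eventually_ge_atTop 1] with a ha
    filter_upwards [ae_restrict_mem measurableSet_Ioi] with s (hs : 0 < s)
    have ha0 : 0 < a := one_pos.trans_le ha
    have hak : a ^ (-k) ≤ 1 := rpow_le_one_of_one_le_of_nonpos ha (neg_nonpos.mpr hk)
    have hWas := hbound (a * s) (mul_nonneg ha0.le hs.le)
    rw [mul_rpow ha0.le hs.le] at hWas
    rw [norm_mul, norm_mul, norm_of_nonneg (rpow_nonneg ha0.le _), norm_of_nonneg (exp_pos _).le,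
      norm_eq_abs]
    calc a ^ (-k) * (exp (-s) * |W (a * s)|)
        ≤ a ^ (-k) * (exp (-s) * (C + B * (a ^ k * s ^ k))) := by gcongr
      _ = exp (-s) * (a ^ (-k) * C + B * s ^ k) := by
          rw [rpow_neg ha0.le]; field_simp
      _ ≤ exp (-s) * (C + B * s ^ k) := by gcongr; exact mul_le_of_le_one_left hC hak
  · have hγ := GammaIntegral_convergent (s := k + 1) (by linarith)
    simp only [add_sub_cancel_right] at hγ
    have : IntegrableOn (fun s => C * exp (-s) + B * (exp (-s) * s ^ k)) (Ioi 0) :=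
      ((integrableOn_exp_neg_Ioi 0).const_mul C).add (hγ.const_mul B)
    exact this.congr_fun (fun s _ => by ring) measurableSet_Ioi
  · filter_upwards [ae_restrict_mem measurableSet_Ioi] with s (hs : 0 < s)
    have hlim := ((hWL.comp (tendsto_id.atTop_mul_const hs)).mul_const (s ^ k)).const_mul (exp (-s))
    refine hlim.congr' ?_
    filter_upwards [eventually_gt_atTop 0] with a ha
    simp only [Function.comp_apply, id]
    have hsk : s ^ k ≠ 0 := (rpow_pos_of_pos hs k).ne'
    rw [mul_rpow ha.le hs.le, rpow_neg ha.le]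
    field_simp

theorem setOf_sq_lt_eq_setOf_lt_sqrt {M : Type*} {ρ : M → ℝ} (hρ0 : ∀ x, 0 ≤ ρ x) (u : ℝ) :
    {x | ρ x ^ 2 < u} = {x | ρ x < √u} := by
  ext x
  exact (lt_sqrt (hρ0 x)).symm

section SublevelSets

variable {M : Type*} [MeasurableSpace M] {μ : Measure M} {ρ : M → ℝ}

theorem measure_setOf_sq_lt_ne_top (hρ0 : ∀ x, 0 ≤ ρ x)
    (hfin : ∀ r > (0 : ℝ), μ {x | ρ x < r} < ⊤) (u : ℝ) : μ {x | ρ x ^ 2 < u} ≠ ⊤ := by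
  rcases le_or_gt u 0 with hu | hu
  · have hempty : {x | ρ x ^ 2 < u} = ∅ := eq_empty_of_forall_notMem fun x (hx : ρ x ^ 2 < u) =>
      hx.not_ge (hu.trans (sq_nonneg _))
    simp [hempty]
  · exact setOf_sq_lt_eq_setOf_lt_sqrt hρ0 u ▸ (hfin _ (sqrt_pos.mpr hu)).ne

theorem tendsto_measure_setOf_sq_lt_div_rpow (hρ0 : ∀ x, 0 ≤ ρ x) {n : ℕ} {L : ℝ}
    (hlim : Tendsto (fun r : ℝ => (μ {x | ρ x < r}).toReal / r ^ n) atTop (𝓝 L)) :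
    Tendsto (fun u : ℝ => (μ {x | ρ x ^ 2 < u}).toReal / u ^ ((n : ℝ) / 2)) atTop (𝓝 L) := by
  refine (hlim.comp tendsto_sqrt_atTop).congr' ?_
  filter_upwards [eventually_ge_atTop 0] with u hu
  rw [Function.comp_apply, setOf_sq_lt_eq_setOf_lt_sqrt hρ0, rpow_div_two_eq_sqrt _ hu,
    rpow_natCast]

end SublevelSets

theorem gaussian_integral_tendsto_avr_general (n : ℕ)
    {M : Type*} [MeasurableSpace M] (μ : Measure M)
    (ρ : M → ℝ) (hρ : Measurable ρ) (hρ0 : ∀ x, 0 ≤ ρ x)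
    (hfin : ∀ r > (0 : ℝ), μ {x | ρ x < r} < ⊤)
    (A : ℝ)
    (hlim : Tendsto (fun r : ℝ => (μ {x | ρ x < r}).toReal / r ^ n) atTop
      (nhds (A * (Real.pi ^ ((n : ℝ) / 2) / Real.Gamma ((n : ℝ) / 2 + 1))))) :
    Tendsto (fun τ : ℝ =>
        ∫ x, (4 * Real.pi * τ) ^ (-(n : ℝ) / 2) * Real.exp (-(ρ x) ^ 2 / (4 * τ)) ∂μ)
      atTop (nhds A) := by
  have hfin_sq := measure_setOf_sq_lt_ne_top hρ0 hfin
  have hW : Monotone fun u => (μ {x | ρ x ^ 2 < u}).toReal := fun a b hab =>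
    ENNReal.toReal_mono (hfin_sq b) (measure_mono fun x (hx : ρ x ^ 2 < a) => hx.trans_le hab)
  have hlaplace := ((hW.tendsto_rpow_neg_mul_integral_exp_neg_mul (by positivity)
    (tendsto_measure_setOf_sq_lt_div_rpow hρ0 hlim)).comp
      (tendsto_id.const_mul_atTop four_pos)).const_mul (π ^ (-(n : ℝ) / 2))
  have hA : π ^ (-(n : ℝ) / 2) * (A * (π ^ ((n : ℝ) / 2) / Gamma ((n : ℝ) / 2 + 1))
      * Gamma ((n : ℝ) / 2 + 1)) = A := by
    have hΓ : Gamma ((n : ℝ) / 2 + 1) ≠ 0 := (Gamma_pos_of_pos (by positivity)).ne'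
    rw [neg_div, rpow_neg pi_pos.le]
    field_simp
  rw [← hA]
  refine hlaplace.congr' ?_
  filter_upwards [eventually_gt_atTop 0] with τ hτ
  rw [Function.comp_apply, id, integral_const_mul,
    integral_exp_neg_div_eq_integral_exp_neg_mul_meas_lt μ (hρ.pow_const 2) (fun x => sq_nonneg _)
      hfin_sq (by positivity), mul_right_comm,
    mul_rpow (by positivity) pi_pos.le, neg_div]
  ring

/-- If `μ({ρ < r})/r^n → A·ω_n` as `r → ∞`, where
`ω_n = π^{n/2}/Γ(n/2+1)` is the volume of the unit Euclidean `n`-ball, then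
`∫_M (4πτ)^{−n/2} e^{−ρ²/(4τ)} dμ → A` as `τ → ∞`. -/
theorem gaussian_integral_tendsto_avr (n : ℕ) (hn : 1 ≤ n)
    {M : Type*} [MeasurableSpace M] (μ : Measure M)
    (ρ : M → ℝ) (hρ : Measurable ρ) (hρ0 : ∀ x, 0 ≤ ρ x)
    (hfin : ∀ r > (0 : ℝ), μ {x | ρ x < r} < ⊤)
    (A : ℝ) (hA : 0 ≤ A)
    (hlim : Tendsto (fun r : ℝ => (μ {x | ρ x < r}).toReal / r ^ n) atTop
      (nhds (A * (Real.pi ^ ((n : ℝ) / 2) / Real.Gamma ((n : ℝ) / 2 + 1))))) :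
    Tendsto (fun τ : ℝ =>
        ∫ x, (4 * Real.pi * τ) ^ (-(n : ℝ) / 2) * Real.exp (-(ρ x) ^ 2 / (4 * τ)) ∂μ)
      atTop (nhds A) :=
  gaussian_integral_tendsto_avr_general n μ ρ hρ hρ0 hfin A hlim
end

section
/- Let n ≥ 1 be a natural number and let V, X : ℝ → ℝ be differentiable on (0,∞) and satisfy n·V(r) − r·V′(r) = 2·X(r) − (4/r)·X′(r) for every r > 0. Assume X(s) ≥ 0 for all s > 0, that P(s) = V(s)/s^n − 4·X(s)/s^{n+2} converges to a real number L as s → ∞, and that for some r ≥ √(2(n+2)) and c ≥ 0 one has X(s) ≤ c·s^{n−1/2} for all s ≥ r. Then L ≥ V(r)/r^n − 4·X(r)/r^{n+2} − 4c/√r. -/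
/-!
Cao–Zhou's identity eliminates `V'` from the derivative of `P`, leaving
`P'(s) = 4(n+2) X(s)/s^{n+3} − 2 X(s)/s^{n+1} ≥ −2 X(s)/s^{n+1}` since `X ≥ 0`.
The growth bound `X(s) ≤ c s^{n−1/2}` turns this into `P'(s) ≥ −2c s^{−3/2}`, which is exactly
the derivative of `−4c/√s`. Hence `P(s) − 4c/√s` is nondecreasing on `[r, ∞)`, and it tends to `L`.
-/

open Filter Set

theorem hasDerivAt_div_pow {f : ℝ → ℝ} {f' s : ℝ} (hf : HasDerivAt f f' s) (hs : s ≠ 0) (n : ℕ) :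
    HasDerivAt (fun t => f t / t ^ n) ((s * f' - n * f s) / s ^ (n + 1)) s := by
  refine (hf.fun_div (hasDerivAt_pow n s) (pow_ne_zero n hs)).congr_deriv ?_
  rcases n with _ | n
  · simp [mul_div_cancel_left₀ _ hs]
  · simp only [add_tsub_cancel_right]
    field_simp
    ring

theorem hasDerivAt_const_div_sqrt (a : ℝ) {s : ℝ} (hs : 0 < s) :
    HasDerivAt (fun t => a / √t) (-(a / (2 * s * √s))) s := by
  refine ((hasDerivAt_const s a).fun_div (Real.hasDerivAt_sqrt hs.ne')
    (Real.sqrt_ne_zero'.2 hs)).congr_deriv ?_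
  field_simp
  rw [Real.sq_sqrt hs.le]
  ring

theorem rpow_natCast_sub_half_div_pow {s : ℝ} (hs : 0 < s) (n : ℕ) :
    s ^ ((n : ℝ) - 1 / 2) / s ^ (n + 1) = 1 / (s * √s) := by
  rw [Real.rpow_sub hs, Real.rpow_natCast, ← Real.sqrt_eq_rpow]
  have hsqrt : 0 < √s := Real.sqrt_pos.2 hs
  field_simp
  ring

/-- `P(s)` in the paper. -/
noncomputable def caoZhouRatio (n : ℕ) (V X : ℝ → ℝ) (s : ℝ) : ℝ :=
  V s / s ^ n - 4 * X s / s ^ (n + 2)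

theorem hasDerivAt_caoZhouRatio {n : ℕ} {V X : ℝ → ℝ} {s : ℝ} (hs : 0 < s)
    (hV : DifferentiableAt ℝ V s) (hX : DifferentiableAt ℝ X s)
    (hid : (n : ℝ) * V s - s * deriv V s = 2 * X s - (4 / s) * deriv X s) :
    HasDerivAt (caoZhouRatio n V X)
      (4 * (n + 2) * X s / s ^ (n + 3) - 2 * X s / s ^ (n + 1)) s := by
  refine ((hasDerivAt_div_pow hV.hasDerivAt hs.ne' n).fun_sub
    (hasDerivAt_div_pow (hX.hasDerivAt.const_mul 4) hs.ne' (n + 2))).congr_deriv ?_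
  have hid' : s * deriv V s = n * V s - 2 * X s + 4 / s * deriv X s := by linarith
  rw [hid']
  field_simp
  push_cast
  ring

theorem monotoneOn_caoZhouRatio_sub_const_div_sqrt {n : ℕ} {V X : ℝ → ℝ} {r c : ℝ} (hr : 0 < r)
    (hV : ∀ s, r ≤ s → DifferentiableAt ℝ V s) (hX : ∀ s, r ≤ s → DifferentiableAt ℝ X s)
    (hid : ∀ s, r ≤ s → (n : ℝ) * V s - s * deriv V s = 2 * X s - (4 / s) * deriv X s)
    (hX0 : ∀ s, r ≤ s → 0 ≤ X s) (hXle : ∀ s, r ≤ s → X s ≤ c * s ^ ((n : ℝ) - 1 / 2)) :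
    MonotoneOn (fun s => caoZhouRatio n V X s - 4 * c / √s) (Ici r) := by
  have hderiv : ∀ s ∈ Ici r, HasDerivAt (fun s => caoZhouRatio n V X s - 4 * c / √s)
      (4 * (n + 2) * X s / s ^ (n + 3) - 2 * X s / s ^ (n + 1) + 2 * c / (s * √s)) s := by
    intro s hs
    have hs0 := hr.trans_le hs
    refine ((hasDerivAt_caoZhouRatio hs0 (hV s hs) (hX s hs) (hid s hs)).sub
      (hasDerivAt_const_div_sqrt (4 * c) hs0)).congr_deriv ?_
    field_simp
    ring
  refine monotoneOn_of_hasDerivWithinAt_nonneg (convex_Ici r)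
    (fun s hs => (hderiv s hs).continuousAt.continuousWithinAt)
    (fun s hs => (hderiv s (interior_subset hs)).hasDerivWithinAt) fun s hs => ?_
  replace hs : r ≤ s := interior_subset hs
  have hs0 := hr.trans_le hs
  have hgrowth : X s / s ^ (n + 1) ≤ c / (s * √s) :=
    calc X s / s ^ (n + 1) ≤ c * s ^ ((n : ℝ) - 1 / 2) / s ^ (n + 1) := by
          gcongr
          exact hXle s hs
      _ = c / (s * √s) := by
          rw [mul_div_assoc, rpow_natCast_sub_half_div_pow hs0, mul_one_div]
  have hcurv : 0 ≤ 4 * (n + 2) * X s / s ^ (n + 3) := by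
    have := hX0 s hs
    positivity
  linarith [mul_div_assoc 2 (X s) (s ^ (n + 1)), mul_div_assoc 2 c (s * √s)]

theorem avr_quantitative_lower_general (n : ℕ) (V X : ℝ → ℝ)
    (hV : ∀ s > (0 : ℝ), DifferentiableAt ℝ V s)
    (hX : ∀ s > (0 : ℝ), DifferentiableAt ℝ X s)
    (hid : ∀ s > (0 : ℝ),
      (n : ℝ) * V s - s * deriv V s = 2 * X s - (4 / s) * deriv X s)
    (hX0 : ∀ s > (0 : ℝ), 0 ≤ X s)
    (L : ℝ)
    (hP : Tendsto (fun s => V s / s ^ n - 4 * X s / s ^ (n + 2)) atTop (nhds L))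
    (r c : ℝ) (hr : Real.sqrt (2 * ((n : ℝ) + 2)) ≤ r)
    (hXle : ∀ s, r ≤ s → X s ≤ c * s ^ ((n : ℝ) - 1 / 2)) :
    V r / r ^ n - 4 * X r / r ^ (n + 2) - 4 * c / Real.sqrt r ≤ L := by
  have hr0 : 0 < r := (Real.sqrt_pos.2 (by positivity)).trans_le hr
  have hpos : ∀ s, r ≤ s → 0 < s := fun s hs => hr0.trans_le hs
  have hmono := monotoneOn_caoZhouRatio_sub_const_div_sqrt hr0 (fun s hs => hV s (hpos s hs))
    (fun s hs => hX s (hpos s hs)) (fun s hs => hid s (hpos s hs))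
    (fun s hs => hX0 s (hpos s hs)) hXle
  have hlim : Tendsto (fun s => caoZhouRatio n V X s - 4 * c / √s) atTop (nhds L) := by
    simpa [caoZhouRatio] using hP.sub (tendsto_const_nhds.div_atTop Real.tendsto_sqrt_atTop)
  exact ge_of_tendsto hlim <|
    (eventually_ge_atTop r).mono fun s hs => hmono self_mem_Ici hs hs

/-- Under Cao–Zhou's identity, `X ≥ 0` on `(0,∞)`,
`P(s) = V(s)/s^n − 4X(s)/s^{n+2} → L`, and `X(s) ≤ c·s^{n−1/2}` for `s ≥ r` with
`r ≥ √(2(n+2))`, one has `L ≥ V(r)/r^n − 4X(r)/r^{n+2} − 4c/√r`. -/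
theorem avr_quantitative_lower (n : ℕ) (hn : 1 ≤ n) (V X : ℝ → ℝ)
    (hV : ∀ s > (0 : ℝ), DifferentiableAt ℝ V s)
    (hX : ∀ s > (0 : ℝ), DifferentiableAt ℝ X s)
    (hid : ∀ s > (0 : ℝ),
      (n : ℝ) * V s - s * deriv V s = 2 * X s - (4 / s) * deriv X s)
    (hX0 : ∀ s > (0 : ℝ), 0 ≤ X s)
    (L : ℝ)
    (hP : Tendsto (fun s => V s / s ^ n - 4 * X s / s ^ (n + 2)) atTop (nhds L))
    (r c : ℝ) (hr : Real.sqrt (2 * ((n : ℝ) + 2)) ≤ r) (hc : 0 ≤ c)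
    (hXle : ∀ s, r ≤ s → X s ≤ c * s ^ ((n : ℝ) - 1 / 2)) :
    V r / r ^ n - 4 * X r / r ^ (n + 2) - 4 * c / Real.sqrt r ≤ L :=
  avr_quantitative_lower_general n V X hV hX hid hX0 L hP r c hr hXle
end
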